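/- Let H be a ℤ-graded module over the polynomial ring k[g] (with g in degree 1) which is left bounded (H_n = 0 for n ≪ 0) and locally finite (each H_n is finite dimensional over k). If the kernel of the multiplication map g : H → H is finite dimensional over k, then the g-torsion submodule {h ∈ H : g^n h = 0 for some n ≥ 1} of H is also finite dimensional over k. -/

import Mathlib

/-!
Multiplication by `g` is homogeneous of degree one, so the torsion is graded. If `y ≠ 0` is a
homogeneous torsion element of degree `n`, the last nonzero `g ^ j • y` is a homogeneous element of
`ker g` of degree `n + j ≥ n`. Since the graded pieces are independent and `ker g` is finite
dimensional, `ker g` meets only finitely many of them, so these degrees are bounded above by some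
`D`. Hence the torsion lies in the finitely many finite-dimensional pieces of degree `N, …, D`.
-/

open Polynomial

namespace DirectSum

variable {R M : Type*} [Semiring R] [AddCommMonoid M] [Module R M] {ℋ : ℤ → Submodule R M}

theorem pow_apply_mem_of_mapsTo {f : Module.End R M} {d : ℤ}
    (hf : ∀ n, ∀ x ∈ ℋ n, f x ∈ ℋ (n + d)) (m : ℕ) :
    ∀ n, ∀ x ∈ ℋ n, (f ^ m) x ∈ ℋ (n + m * d) := by
  intro n x hx
  induction m with
  | zero => simpa using hx
  | succ m ih =>
    rw [pow_succ', Module.End.mul_apply]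
    convert hf _ _ ih using 2
    push_cast
    ring

variable [Decomposition ℋ]

theorem decompose_map_of_mapsTo {f : M →ₗ[R] M} {d : ℤ}
    (hf : ∀ n, ∀ x ∈ ℋ n, f x ∈ ℋ (n + d)) (x : M) (n : ℤ) :
    (decompose ℋ (f x) (n + d) : M) = f (decompose ℋ x n) := by
  classical
  induction x using Decomposition.inductionOn ℋ generalizing n with
  | zero => simp
  | @homogeneous i y =>
    obtain ⟨y, hy⟩ := y
    rcases eq_or_ne i n with rfl | hin
    · rw [decompose_of_mem_same ℋ hy, decompose_of_mem_same ℋ (hf i y hy)]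
    · rw [decompose_of_mem_ne ℋ hy hin, decompose_of_mem_ne ℋ (hf i y hy) (by omega), map_zero]
  | add a b ha hb =>
    simp only [map_add, decompose_add, add_apply, Submodule.coe_add, ha, hb]

theorem decompose_mem_ker_of_mapsTo {f : M →ₗ[R] M} {d : ℤ}
    (hf : ∀ n, ∀ x ∈ ℋ n, f x ∈ ℋ (n + d)) {x : M} (hx : x ∈ LinearMap.ker f) (n : ℤ) :
    (decompose ℋ x n : M) ∈ LinearMap.ker f := by
  rw [LinearMap.mem_ker] at hx ⊢
  rw [← decompose_map_of_mapsTo hf, hx, decompose_zero, zero_apply, ZeroMemClass.coe_zero]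

theorem mem_of_forall_decompose_mem {p : Submodule R M} {x : M}
    (h : ∀ n, (decompose ℋ x n : M) ∈ p) : x ∈ p := by
  classical
  rw [← sum_support_decompose ℋ x]
  exact Submodule.sum_mem _ fun n _ => h n

end DirectSum

theorem iSupIndep.finite_setOf_inf_ne_bot {R M ι : Type*} [Ring R] [AddCommGroup M] [Module R M]
    {N : ι → Submodule R M} (hN : iSupIndep N) (p : Submodule R M) [IsNoetherian R p] :
    {i | N i ⊓ p ≠ ⊥}.Finite := by
  have hcomap : iSupIndep fun i => (N i).comap p.subtype := by
    apply (iSupIndep_map_orderIso_iff (Submodule.mapIic p)).mp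
    apply iSupIndep.of_coe_Iic_comp
    refine hN.mono fun i => ?_
    simp [Submodule.map_comap_subtype]
  refine (Submodule.finite_ne_bot_of_iSupIndep hcomap).subset fun i hi => ?_
  rwa [Set.mem_ofPred_eq, ne_eq, ← Submodule.disjoint_iff_comap_eq_bot, disjoint_iff, inf_comm]

theorem Module.End.exists_pow_apply_ne_zero_and_apply_eq_zero {R M : Type*} [Semiring R]
    [AddCommMonoid M] [Module R M] (f : Module.End R M) {x : M} (hx : x ≠ 0) {m : ℕ}
    (hm : (f ^ m) x = 0) : ∃ j : ℕ, (f ^ j) x ≠ 0 ∧ f ((f ^ j) x) = 0 := by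
  induction m with
  | zero => exact absurd hm (by simpa using hx)
  | succ m ih =>
    by_cases hfm : (f ^ m) x = 0
    · exact ih hfm
    · exact ⟨m, hfm, by rwa [pow_succ', Module.End.mul_apply] at hm⟩

section GradedTorsion

open DirectSum

variable {R M : Type*} [Semiring R] [AddCommMonoid M] [Module R M] {ℋ : ℤ → Submodule R M}
  {g : Module.End R M}

theorem exists_inf_ker_ne_bot_of_mem_ker_pow (hg : ∀ n, ∀ x ∈ ℋ n, g x ∈ ℋ (n + 1)) {n : ℤ}
    {m : ℕ} {x : M} (hxn : x ∈ ℋ n) (hx : x ≠ 0) (hxm : (g ^ m) x = 0) :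
    ∃ j : ℕ, ℋ (n + j) ⊓ LinearMap.ker g ≠ ⊥ := by
  obtain ⟨j, hj, hgj⟩ := g.exists_pow_apply_ne_zero_and_apply_eq_zero hx hxm
  have hmem := pow_apply_mem_of_mapsTo hg j n x hxn
  rw [mul_one] at hmem
  exact ⟨j, (Submodule.ne_bot_iff _).mpr ⟨_, ⟨hmem, hgj⟩, hj⟩⟩

theorem ker_pow_le_sup_Icc [Decomposition ℋ] (hg : ∀ n, ∀ x ∈ ℋ n, g x ∈ ℋ (n + 1))
    {N D : ℤ} (hN : ∀ n < N, ℋ n = ⊥) (hD : ∀ n, ℋ n ⊓ LinearMap.ker g ≠ ⊥ → n ≤ D) (m : ℕ) :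
    LinearMap.ker (g ^ m) ≤ (Finset.Icc N D).sup ℋ := by
  intro x hx
  refine mem_of_forall_decompose_mem (ℋ := ℋ) fun n => ?_
  set y : M := ↑(decompose ℋ x n)
  have hyn : y ∈ ℋ n := (decompose ℋ x n).2
  have hym : (g ^ m) y = 0 :=
    decompose_mem_ker_of_mapsTo (pow_apply_mem_of_mapsTo hg m) hx n
  by_cases hy : y = 0
  · rw [hy]
    exact zero_mem _
  have hNn : N ≤ n := by
    by_contra! hn
    exact hy (by simpa [hN n hn] using hyn)
  obtain ⟨j, hj⟩ := exists_inf_ker_ne_bot_of_mem_ker_pow hg hyn hy hym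
  have hnD : n ≤ D := by linarith [hD _ hj]
  exact Finset.le_sup (f := ℋ) (Finset.mem_Icc.mpr ⟨hNn, hnD⟩) hyn

end GradedTorsion

theorem stmt_0_general (k : Type*) [Field k] (H : Type*) [AddCommGroup H]
    [Module (Polynomial k) H] [Module k H]
    -- the grading
    (ℋ : ℤ → Submodule k H) (hinternal : DirectSum.IsInternal ℋ)
    (hdeg : ∀ (n : ℤ), ∀ x ∈ ℋ n, (X : Polynomial k) • x ∈ ℋ (n + 1))
    -- locally finite
    (hlf : ∀ n : ℤ, FiniteDimensional k (ℋ n))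
    -- left bounded
    (hlb : ∃ N : ℤ, ∀ n < N, ℋ n = ⊥)
    -- the multiplication map `·g` as a `k`-linear endomorphism of `H`
    (g : Module.End k H) (hgdef : ∀ x : H, g x = (X : Polynomial k) • x)
    -- its kernel is finite dimensional
    (hker : FiniteDimensional k (LinearMap.ker g)) :
    -- then the g-torsion submodule is finite dimensional
    FiniteDimensional k ↥(⨆ m : ℕ, LinearMap.ker (g ^ (m + 1))) := by
  obtain ⟨N, hN⟩ := hlb
  obtain ⟨D, hD⟩ :=
    (hinternal.submodule_iSupIndep.finite_setOf_inf_ne_bot (LinearMap.ker g)).bddAbove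
  let := hinternal.chooseDecomposition
  have hg : ∀ n, ∀ x ∈ ℋ n, g x ∈ ℋ (n + 1) := fun n x hx => hgdef x ▸ hdeg n x hx
  have : FiniteDimensional k ↥((Finset.Icc N D).sup ℋ : Submodule k H) :=
    Submodule.finiteDimensional_finset_sup _ _
  exact Submodule.finiteDimensional_of_le
    (iSup_le fun m => ker_pow_le_sup_Icc hg hN (fun n hn => hD hn) (m + 1))

theorem stmt_0 (k : Type*) [Field k] (H : Type*) [AddCommGroup H]
    [Module (Polynomial k) H] [Module k H] [IsScalarTower k (Polynomial k) H]
    -- the grading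
    (ℋ : ℤ → Submodule k H) (hinternal : DirectSum.IsInternal ℋ)
    (hdeg : ∀ (n : ℤ), ∀ x ∈ ℋ n, (X : Polynomial k) • x ∈ ℋ (n + 1))
    -- locally finite
    (hlf : ∀ n : ℤ, FiniteDimensional k (ℋ n))
    -- left bounded
    (hlb : ∃ N : ℤ, ∀ n < N, ℋ n = ⊥)
    -- the multiplication map `·g` as a `k`-linear endomorphism of `H`
    (g : Module.End k H) (hgdef : ∀ x : H, g x = (X : Polynomial k) • x)
    -- its kernel is finite dimensional
    (hker : FiniteDimensional k (LinearMap.ker g)) :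
    -- then the g-torsion submodule is finite dimensional
    FiniteDimensional k ↥(⨆ m : ℕ, LinearMap.ker (g ^ (m + 1))) :=
  stmt_0_general k H ℋ hinternal hdeg hlf hlb g hgdef hker
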